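/- With Z, W, μ_Z, τ_W as above, let τ_W^{(k)} denote the time of the k-th return to W. For each i ≥ 1 and each integer ω ≥ 1, using independence of the successive W-return block lengths, μ_Z({x ∈ Z : τ_W^{(i+j−1)}(x) − τ_W^{(i+j−2)}(x) < N^{j+1} for all 1 ≤ j ≤ ω}) ≤ Π_{j=1}^ω N^{j+1} μ(W) ≤ N^{(ω+1)(ω+2)/2} μ(W)^ω. -/

import Mathlib

open scoped Matrix.Norms.L2Operator ENNReal
open MeasureTheory Filter Topology

instance : MeasurableSpace (Matrix (Fin 2) (Fin 2) ℝ) :=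
  (inferInstance : MeasurableSpace (Fin 2 → Fin 2 → ℝ))

/-- The sequence space `Σ = {0,1}^ℤ`. -/
abbrev Sig : Type := ℤ → Bool

/-- The left shift map. -/
def shift (x : Sig) : Sig := fun n => x (n + 1)

/-- The cocycle product `A^n(x) = A(T^{n-1}x) ⋯ A(x)` over a map `T`. -/
noncomputable def cocycleOver {X : Type*} (T : X → X)
    (A : X → Matrix (Fin 2) (Fin 2) ℝ) : ℕ → X → Matrix (Fin 2) (Fin 2) ℝ
  | 0, _ => 1
  | n + 1, x => cocycleOver T A n (T x) * A x

/-- The cocycle product over the left shift. -/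
noncomputable abbrev cocycle : (Sig → Matrix (Fin 2) (Fin 2) ℝ) → ℕ → Sig → Matrix (Fin 2) (Fin 2) ℝ :=
  cocycleOver shift

/-- The diagonal cocycle `A_σ`. -/
noncomputable def Asig (σ : ℝ) (x : Sig) : Matrix (Fin 2) (Fin 2) ℝ :=
  if x 0 then Matrix.diagonal ![σ, σ⁻¹] else Matrix.diagonal ![σ⁻¹, σ]

/-- `μ` is the Bernoulli product measure with parameter `p` on `{0,1}^ℤ`. -/
def IsBernoulli (p : ℝ) (μ : Measure Sig) : Prop :=
  IsProbabilityMeasure μ ∧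
    ∀ (s : Finset ℤ) (b : ℤ → Bool),
      μ {x | ∀ i ∈ s, x i = b i} = ∏ i ∈ s, ENNReal.ofReal (if b i then p else 1 - p)

/-- The upper Lyapunov exponent `λ₊(A,μ) = inf_{n ≥ 1} (1/n) ∫ log ‖A^n‖ dμ`. -/
noncomputable def lyap {X : Type*} [MeasurableSpace X] (T : X → X) (A : X → Matrix (Fin 2) (Fin 2) ℝ)
    (μ : Measure X) : ℝ :=
  ⨅ n : ℕ, ((n : ℝ) + 1)⁻¹ * ∫ x, Real.log ‖cocycleOver T A (n + 1) x‖ ∂μ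

/-- The first return time to a set `Z` under the shift. -/
noncomputable def retTime (Z : Set Sig) (x : Sig) : ℕ :=
  sInf {n : ℕ | 1 ≤ n ∧ shift^[n] x ∈ Z}

/-- The `k`-th return time to `W` under the shift. -/
noncomputable def retTimeK (W : Set Sig) : ℕ → Sig → ℕ
  | 0, _ => 0
  | k + 1, x => retTimeK W k x + retTime W (shift^[retTimeK W k x] x)

/-- The distance `d(x,y) = 2^{-N(x,y)}` on `Σ`. -/
noncomputable def NSig (x y : Sig) : ℕ :=
  sSup {N : ℕ | ∀ n : ℤ, |n| < (N : ℤ) → x n = y n}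

open Classical in
noncomputable def dSig (x y : Sig) : ℝ :=
  if x = y then 0 else (2 : ℝ) ^ (-(NSig x y : ℤ))

/-- The `α`-Hölder norm of a matrix-valued function on `Σ`. -/
noncomputable def holderNorm (α : ℝ) (A : Sig → Matrix (Fin 2) (Fin 2) ℝ) : ℝ :=
  (⨆ x : Sig, ‖A x‖) +
    ⨆ q : {q : Sig × Sig // q.1 ≠ q.2}, ‖A q.1.1 - A q.1.2‖ / (dSig q.1.1 q.1.2) ^ α

/-- A locally constant function on `Σ`: constant on cylinders of some finite length. -/
def IsLocConst (A : Sig → Matrix (Fin 2) (Fin 2) ℝ) : Prop :=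
  ∃ k : ℕ, ∀ x y : Sig, (∀ n : ℤ, |n| ≤ (k : ℤ) → x n = y n) → A x = A y

/-- The cocycle takes values in `SL(2,ℝ)`. -/
def IsSL2 (A : Sig → Matrix (Fin 2) (Fin 2) ℝ) : Prop := ∀ x, (A x).det = 1

/-- The sum `S_n(x)` of the first `n` symbols of `x`. -/
def Ssum (n : ℕ) (x : Sig) : ℕ := ∑ i ∈ Finset.range n, (if x (i : ℤ) then 1 else 0)

/-!
Under a Bernoulli measure the coordinates are independent, so events decided by disjoint blocks of
coordinates are independent. A visit to `W` at time `u` is decided by the block `[u, u + g]` and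
has probability `p (1 - p)^g`; a visit at `s` forbids visits in `(s, s + g]`, and `x ∈ Z` forbids
visits in `(0, N]`. Hence, conditioning on the time `t` of the `(i-1)`-th return, which together
with `Z` is decided by the coordinates up to `max N (t + g)`, each of the next `ω` returns lies
beyond the coordinates already used, and a union bound over its at most `N^(j+1)` possible
positions costs a factor `N^(j+1) p (1 - p)^g`. Since returns to `W` occur infinitely often almost
surely (second Borel–Cantelli lemma), the return times are the genuine visit times almost
everywhere, and summing over the disjoint events `{τ^(i-1) = t}` gives the bound with `μ Z`.
-/

open ProbabilityTheory

section DependsOn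

variable {ι β : Type*} {A B : Set (ι → β)} {s : Set ι}

theorem dependsOn_mem_iff :
    DependsOn (· ∈ A) s ↔ ∀ ⦃x y : ι → β⦄, (∀ i ∈ s, x i = y i) → x ∈ A → y ∈ A := by
  refine ⟨fun h x y hxy hx => cast (h hxy) hx, fun h x y hxy => propext ⟨h hxy, h ?_⟩⟩
  exact fun i hi => (hxy i hi).symm

theorem DependsOn.mem_inter (hA : DependsOn (· ∈ A) s) (hB : DependsOn (· ∈ B) s) :
    DependsOn (· ∈ A ∩ B) s :=
  fun _ _ hxy => congrArg₂ And (hA hxy) (hB hxy)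

theorem DependsOn.mem_biInter {κ : Type*} {A : κ → Set (ι → β)} {S : κ → Set ι} {t : Set κ}
    (hA : ∀ k, DependsOn (· ∈ A k) (S k)) : DependsOn (· ∈ ⋂ k ∈ t, A k) (⋃ k ∈ t, S k) := by
  refine dependsOn_mem_iff.2 fun x y hxy hx => Set.mem_iInter₂.2 fun k hk => ?_
  exact dependsOn_mem_iff.1 (hA k) (fun i hi => hxy i (Set.mem_biUnion hk hi))
    (Set.mem_iInter₂.1 hx k hk)

theorem preimage_restrict_image_eq {S : Finset ι} (hA : DependsOn (· ∈ A) (S : Set ι)) :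
    S.restrict ⁻¹' (S.restrict '' A) = A := by
  refine Set.Subset.antisymm ?_ (Set.subset_preimage_image _ _)
  rintro y ⟨x, hx, hxy⟩
  exact dependsOn_mem_iff.1 hA (fun i hi => congrFun hxy ⟨i, hi⟩) hx

variable [MeasurableSpace β] [Countable β] [MeasurableSingletonClass β]

theorem measurableSet_of_dependsOn {S : Finset ι} (hA : DependsOn (· ∈ A) (S : Set ι)) :
    MeasurableSet A := by
  rw [← preimage_restrict_image_eq hA]
  exact Finset.measurable_restrict S .of_discrete

variable {μ : Measure (ι → β)}

theorem measure_inter_eq_mul_of_dependsOn (hμ : iIndepFun (fun i (x : ι → β) => x i) μ)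
    {S T : Finset ι} (hST : Disjoint S T) (hA : DependsOn (· ∈ A) (S : Set ι))
    (hB : DependsOn (· ∈ B) (T : Set ι)) : μ (A ∩ B) = μ A * μ B := by
  rw [← preimage_restrict_image_eq hA, ← preimage_restrict_image_eq hB]
  exact (hμ.indepFun_finset S T hST measurable_pi_apply).measure_inter_preimage_eq_mul _ _
    .of_discrete .of_discrete

theorem iIndepSet_of_dependsOn {κ : Type*} (hμ : iIndepFun (fun i (x : ι → β) => x i) μ)
    {A : κ → Set (ι → β)} {S : κ → Finset ι} (hS : Pairwise fun k l => Disjoint (S k) (S l))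
    (hA : ∀ k, DependsOn (· ∈ A k) (S k : Set ι)) : iIndepSet A μ := by
  classical
  have := hμ.isProbabilityMeasure
  refine (iIndepSet_iff_meas_biInter fun k => measurableSet_of_dependsOn (hA k)).2 fun t => ?_
  induction t using Finset.induction_on with
  | empty => simp
  | insert a t ha ih =>
    have hdisj : Disjoint (S a) (t.biUnion S) :=
      (Finset.disjoint_biUnion_right _ _ _).2 fun k hk => hS fun h => ha (h ▸ hk)
    have hrest : DependsOn (· ∈ ⋂ k ∈ t, A k) (t.biUnion S : Set ι) := by
      simpa using DependsOn.mem_biInter (t := (t : Set κ)) hA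
    rw [Finset.set_biInter_insert, Finset.prod_insert ha,
      measure_inter_eq_mul_of_dependsOn hμ hdisj (hA a) hrest, ih]

end DependsOn

theorem IsBernoulli.iIndepFun_coord {p : ℝ} {μ : Measure Sig} (hμ : IsBernoulli p μ) :
    iIndepFun (fun i (x : Sig) => x i) μ := by
  have hset : iIndepSet (fun i => {x : Sig | x i = true}) μ := by
    refine (iIndepSet_iff_meas_biInter (f := fun i => {x : Sig | x i = true}) fun i =>
      measurableSet_eq_fun (measurable_pi_apply i) measurable_const).2 fun s => ?_
    have hsingle : ∀ i, μ {x : Sig | x i = true} = ENNReal.ofReal p := fun i => by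
      simpa using hμ.2 {i} fun _ => true
    simpa [hsingle, Set.ofPred_forall] using hμ.2 s fun _ => true
  rw [iIndepFun_iff_iIndep]
  convert (iIndepSet_iff_iIndep _ _).1 hset with i
  refine le_antisymm (Measurable.comap_le ?_) (MeasurableSpace.generateFrom_le ?_)
  · exact measurable_to_bool (MeasurableSpace.measurableSet_generateFrom rfl)
  · rintro _ rfl
    exact ⟨{true}, trivial, rfl⟩

theorem shift_iterate_apply (n : ℕ) (x : Sig) (k : ℤ) : shift^[n] x k = x (k + n) := by
  induction n generalizing x with
  | zero => simp
  | succ n ih =>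
    rw [Function.iterate_succ_apply, ih]
    simp only [shift, Nat.cast_succ]
    ring_nf

def oneThenZeros (g : ℕ) : Set Sig :=
  {x | x 0 = true ∧ ∀ k : ℤ, 1 ≤ k → k ≤ (g : ℤ) → x k = false}

section OneThenZeros

variable {g : ℕ} {x : Sig}

theorem oneThenZeros_antitone : Antitone oneThenZeros :=
  fun _ _ hgN _ hx => ⟨hx.1, fun k hk1 hk2 => hx.2 k hk1 (hk2.trans (by exact_mod_cast hgN))⟩

theorem shift_iterate_mem_oneThenZeros {s : ℕ} :
    shift^[s] x ∈ oneThenZeros g ↔ x s = true ∧ ∀ k : ℤ, s < k → k ≤ s + g → x k = false := by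
  simp only [oneThenZeros, Set.mem_ofPred_eq, shift_iterate_apply, zero_add]
  refine and_congr_right fun _ =>
    ⟨fun h k hk1 hk2 => ?_, fun h k hk1 hk2 => h _ (by omega) (by omega)⟩
  simpa using h (k - s) (by omega) (by omega)

theorem shift_iterate_notMem_oneThenZeros {g' s u : ℕ} (hs : shift^[s] x ∈ oneThenZeros g)
    (hsu : s < u) (hug : u ≤ s + g) : shift^[u] x ∉ oneThenZeros g' := fun hu => by
  have := (shift_iterate_mem_oneThenZeros.1 hs).2 u (by exact_mod_cast hsu) (by exact_mod_cast hug)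
  simp [(shift_iterate_mem_oneThenZeros.1 hu).1] at this

theorem dependsOn_shift_iterate_mem_oneThenZeros (s : ℕ) :
    DependsOn (· ∈ shift^[s] ⁻¹' oneThenZeros g) (Finset.Icc (s : ℤ) (s + g) : Set ℤ) := by
  refine dependsOn_mem_iff.2 fun x y hxy hx => ?_
  simp only [Set.mem_preimage, shift_iterate_mem_oneThenZeros, Finset.coe_Icc, Set.mem_Icc] at *
  refine ⟨hxy s (by omega) ▸ hx.1, fun k hk1 hk2 => ?_⟩
  rw [← hxy k (by omega)]
  exact hx.2 k hk1 hk2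

theorem IsBernoulli.measure_shift_iterate_preimage_oneThenZeros {p : ℝ} {μ : Measure Sig}
    (hμ : IsBernoulli p μ) (hp : p ∈ Set.Ioo (0 : ℝ) 1) (s : ℕ) :
    μ (shift^[s] ⁻¹' oneThenZeros g) = ENNReal.ofReal (p * (1 - p) ^ g) := by
  have hcyl : shift^[s] ⁻¹' oneThenZeros g =
      {x | ∀ i ∈ Finset.Icc (s : ℤ) (s + g), x i = decide (i = s)} := by
    ext x
    simp only [Set.mem_preimage, shift_iterate_mem_oneThenZeros, Finset.mem_Icc,
      Set.mem_ofPred_eq]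
    constructor
    · rintro ⟨h0, h⟩ i ⟨hi1, hi2⟩
      rcases hi1.eq_or_lt with rfl | hi1
      · simpa using h0
      · simpa [hi1.ne'] using h i hi1 hi2
    · intro h
      exact ⟨by simpa using h s (by omega),
        fun k hk1 hk2 => by simpa [hk1.ne'] using h k (by omega)⟩
  have hs : (s : ℤ) ∈ Finset.Icc (s : ℤ) (s + g) := by simp
  rw [hcyl, hμ.2, ← Finset.mul_prod_erase _ _ hs,
    Finset.prod_congr rfl fun i hi => by rw [decide_eq_false (Finset.ne_of_mem_erase hi)],
    Finset.prod_const, Finset.card_erase_of_mem hs, Int.card_Icc]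
  simp only [decide_true, ite_true, Bool.false_eq_true, ite_false]
  rw [show ((s : ℤ) + g + 1 - s).toNat - 1 = g by omega,
    ← ENNReal.ofReal_pow (by linarith [hp.2]), ← ENNReal.ofReal_mul hp.1.le]

end OneThenZeros

theorem IsBernoulli.ae_frequently_shift_iterate_mem_oneThenZeros {p : ℝ} {μ : Measure Sig}
    (hμ : IsBernoulli p μ) (hp : p ∈ Set.Ioo (0 : ℝ) 1) (g : ℕ) :
    ∀ᵐ x ∂μ, ∃ᶠ n in atTop, shift^[n] x ∈ oneThenZeros g := by
  have := hμ.1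
  set s : ℕ → Set Sig := fun l => shift^[l * (g + 1)] ⁻¹' oneThenZeros g
  have hdep : ∀ l, DependsOn (· ∈ s l)
      (Finset.Icc ((l * (g + 1) : ℕ) : ℤ) ((l * (g + 1) : ℕ) + g) : Set ℤ) :=
    fun l => dependsOn_shift_iterate_mem_oneThenZeros _
  have hindep : iIndepSet s μ := by
    refine iIndepSet_of_dependsOn hμ.iIndepFun_coord (fun l m hlm => ?_) hdep
    refine Finset.disjoint_left.2 fun i hl hm => ?_
    simp only [Finset.mem_Icc] at hl hm
    have block_lt : ∀ {a b : ℕ}, a < b → a * (g + 1) + g < b * (g + 1) := fun h => by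
      have := Nat.mul_le_mul_right (g + 1) h
      rw [Nat.succ_mul] at this
      omega
    rcases Nat.lt_or_gt_of_ne hlm with h | h <;> have := block_lt h <;> omega
  have hq : ENNReal.ofReal (p * (1 - p) ^ g) ≠ 0 :=
    (ENNReal.ofReal_pos.2 (mul_pos hp.1 (pow_pos (by linarith [hp.2]) g))).ne'
  have hmeas : ∀ l, MeasurableSet (s l) := fun l => measurableSet_of_dependsOn (hdep l)
  have hlimsup : μ (limsup s atTop) = 1 := by
    refine measure_limsup_eq_one hmeas hindep ?_
    simp only [s, hμ.measure_shift_iterate_preimage_oneThenZeros hp]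
    exact ENNReal.tsum_const_eq_top_of_ne_zero hq
  filter_upwards [(mem_ae_iff_prob_eq_one (MeasurableSet.measurableSet_limsup hmeas)).2 hlimsup]
    with x hx
  exact (tendsto_id.atTop_mul_const' (by omega : 0 < g + 1)).frequently
    (mem_limsup_iff_frequently_mem.1 hx)

section ReturnTimes

variable {W : Set Sig} {x : Sig}

theorem shift_iterate_retTime_mem (hx : ∃ᶠ n in atTop, shift^[n] x ∈ W) (a : ℕ) :
    1 ≤ retTime W (shift^[a] x) ∧ shift^[retTime W (shift^[a] x) + a] x ∈ W := by
  rw [Function.iterate_add_apply]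
  refine Nat.sInf_mem (s := {n | 1 ≤ n ∧ shift^[n] (shift^[a] x) ∈ W}) ?_
  obtain ⟨b, hab, hb⟩ := Filter.frequently_atTop.1 hx (a + 1)
  exact ⟨b - a, by omega, by rwa [← Function.iterate_add_apply, Nat.sub_add_cancel (by omega)]⟩

theorem retTimeK_lt_retTimeK_succ (hx : ∃ᶠ n in atTop, shift^[n] x ∈ W) (k : ℕ) :
    retTimeK W k x < retTimeK W (k + 1) x := by
  have := (shift_iterate_retTime_mem hx (retTimeK W k x)).1
  rw [retTimeK]
  omega

theorem shift_iterate_retTimeK_succ_mem (hx : ∃ᶠ n in atTop, shift^[n] x ∈ W) (k : ℕ) :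
    shift^[retTimeK W (k + 1) x] x ∈ W := by
  rw [retTimeK, add_comm]
  exact (shift_iterate_retTime_mem hx _).2

theorem shift_iterate_notMem_of_lt_retTimeK_succ {k s : ℕ} (hks : retTimeK W k x < s)
    (hsk : s < retTimeK W (k + 1) x) : shift^[s] x ∉ W := by
  rw [retTimeK] at hsk
  have hnot := Nat.notMem_of_lt_sInf (m := s - retTimeK W k x)
    (s := {n | 1 ≤ n ∧ shift^[n] (shift^[retTimeK W k x] x) ∈ W}) (by rw [retTime] at hsk; omega)
  rw [Set.mem_ofPred_eq, ← Function.iterate_add_apply, Nat.sub_add_cancel hks.le] at hnot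
  exact fun hs => hnot ⟨by omega, hs⟩

open Classical in
theorem card_filter_shift_iterate_mem_Icc_retTimeK (hx : ∃ᶠ n in atTop, shift^[n] x ∈ W)
    (k : ℕ) : ((Finset.Icc 1 (retTimeK W k x)).filter fun s => shift^[s] x ∈ W).card = k := by
  induction k with
  | zero => simp [retTimeK]
  | succ k ih =>
    have hlt := retTimeK_lt_retTimeK_succ hx k
    have hsplit : (Finset.Icc 1 (retTimeK W (k + 1) x)).filter (fun s => shift^[s] x ∈ W) =
        insert (retTimeK W (k + 1) x)
          ((Finset.Icc 1 (retTimeK W k x)).filter fun s => shift^[s] x ∈ W) := by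
      ext s
      simp only [Finset.mem_filter, Finset.mem_insert, Finset.mem_Icc]
      constructor
      · rintro ⟨⟨hs1, hs2⟩, hs⟩
        by_cases hsk : s ≤ retTimeK W k x
        · exact Or.inr ⟨⟨hs1, hsk⟩, hs⟩
        · refine Or.inl (hs2.eq_or_lt.resolve_right fun hs2 => ?_)
          exact shift_iterate_notMem_of_lt_retTimeK_succ (not_le.1 hsk) hs2 hs
      · rintro (rfl | ⟨⟨hs1, hs2⟩, hs⟩)
        · exact ⟨⟨by omega, le_rfl⟩, shift_iterate_retTimeK_succ_mem hx k⟩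
        · exact ⟨⟨hs1, by omega⟩, hs⟩
    rw [hsplit, Finset.card_insert_of_notMem (by simp; omega), ih]

end ReturnTimes

open Classical in
/-- For `x ∈ W` returning to `W` infinitely often, `x ∈ returnAt W k t` iff `retTimeK W k x = t`;
unlike the latter, this is decided by finitely many coordinates. -/
def returnAt (W : Set Sig) (k t : ℕ) : Set Sig :=
  {x | shift^[t] x ∈ W ∧ ((Finset.Icc 1 t).filter fun s => shift^[s] x ∈ W).card = k}

theorem mem_returnAt_retTimeK {W : Set Sig} {x : Sig} (hxW : x ∈ W)
    (hx : ∃ᶠ n in atTop, shift^[n] x ∈ W) (k : ℕ) : x ∈ returnAt W k (retTimeK W k x) := by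
  refine ⟨?_, card_filter_shift_iterate_mem_Icc_retTimeK hx k⟩
  cases k with
  | zero => exact hxW
  | succ k => exact shift_iterate_retTimeK_succ_mem hx k

theorem pairwise_disjoint_returnAt (W : Set Sig) (k : ℕ) :
    Pairwise fun t t' => Disjoint (returnAt W k t) (returnAt W k t') := by
  classical
  suffices h : ∀ t t', t < t' → Disjoint (returnAt W k t) (returnAt W k t') from
    fun t t' hne => hne.lt_or_gt.elim (h t t') fun hlt => (h t' t hlt).symm
  refine fun t t' hlt => Set.disjoint_left.2 fun x ⟨_, hcard⟩ ⟨hx', hcard'⟩ => ?_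
  have hsub : insert t' ((Finset.Icc 1 t).filter fun s => shift^[s] x ∈ W) ⊆
      (Finset.Icc 1 t').filter fun s => shift^[s] x ∈ W := by
    intro s hs
    simp only [Finset.mem_insert, Finset.mem_filter, Finset.mem_Icc] at hs ⊢
    rcases hs with rfl | ⟨⟨hs1, hs2⟩, hs⟩
    · exact ⟨⟨by omega, le_rfl⟩, hx'⟩
    · exact ⟨⟨hs1, by omega⟩, hs⟩
  have := Finset.card_le_card hsub
  rw [Finset.card_insert_of_notMem (by simp; omega)] at this
  omega

theorem dependsOn_returnAt (g k t : ℕ) :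
    DependsOn (· ∈ returnAt (oneThenZeros g) k t) (Finset.Icc 0 ((t + g : ℕ) : ℤ) : Set ℤ) := by
  classical
  have hhit : ∀ s ≤ t, DependsOn (· ∈ shift^[s] ⁻¹' oneThenZeros g)
      (Finset.Icc 0 ((t + g : ℕ) : ℤ) : Set ℤ) := fun s hs =>
    (dependsOn_shift_iterate_mem_oneThenZeros s).mono fun i hi => by
      simp only [Finset.coe_Icc, Set.mem_Icc] at hi ⊢; omega
  refine dependsOn_mem_iff.2 fun x y hxy ⟨hxt, hcard⟩ => ⟨cast (hhit t le_rfl hxy) hxt, ?_⟩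
  rw [← hcard]
  congr 1
  refine Finset.filter_congr fun s hs => ?_
  exact (Iff.of_eq (hhit s (Finset.mem_Icc.1 hs).2 hxy)).symm

/-- The points with `n` successive visits `s < s₁ < ⋯ < sₙ` to `W` such that `sⱼ₊₁ - sⱼ < b j`
(with `s₀ = s`). -/
def shortGapChain (W : Set Sig) (b : ℕ → ℕ) : ℕ → ℕ → Set Sig
  | 0, _ => Set.univ
  | n + 1, s => ⋃ u ∈ Finset.Ioo s (s + b 0),
      shift^[u] ⁻¹' W ∩ shortGapChain W (fun j => b (j + 1)) n u

theorem mem_shortGapChain_retTimeK {W : Set Sig} {x : Sig}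
    (hx : ∃ᶠ n in atTop, shift^[n] x ∈ W) {n k : ℕ} {b : ℕ → ℕ}
    (hgap : ∀ j < n, retTimeK W (k + j + 1) x - retTimeK W (k + j) x < b j) :
    x ∈ shortGapChain W b n (retTimeK W k x) := by
  induction n generalizing k b with
  | zero => trivial
  | succ n ih =>
    have hlt := retTimeK_lt_retTimeK_succ hx k
    have h0 := hgap 0 (by omega)
    simp only [add_zero] at h0
    refine Set.mem_biUnion (x := retTimeK W (k + 1) x) (Finset.mem_Ioo.2 ⟨hlt, by omega⟩)
      ⟨shift_iterate_retTimeK_succ_mem hx k, ih fun j hj => ?_⟩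
    simpa only [add_right_comm, add_assoc] using hgap (j + 1) (by omega)

section ChainBound

variable {p : ℝ} {μ : Measure Sig} {g : ℕ}

/-- As no `x ∈ A` visits `oneThenZeros g` during `(s, M]`, the next visit after `s` happens at
some `u > M`, and is then independent of `A`. -/
theorem IsBernoulli.measure_inter_shortGapChain_le (hμ : IsBernoulli p μ)
    (hp : p ∈ Set.Ioo (0 : ℝ) 1) (b : ℕ → ℕ) (n : ℕ) {A : Set Sig} {s M : ℕ}
    (hA : DependsOn (· ∈ A) (Finset.Icc 0 (M : ℤ) : Set ℤ))
    (hfree : ∀ u, s < u → u ≤ M → ∀ x ∈ A, shift^[u] x ∉ oneThenZeros g) :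
    μ (A ∩ shortGapChain (oneThenZeros g) b n s) ≤
      μ A * ∏ j ∈ Finset.range n, (b j * ENNReal.ofReal (p * (1 - p) ^ g)) := by
  set q := ENNReal.ofReal (p * (1 - p) ^ g)
  induction n generalizing A s M b with
  | zero => simp [shortGapChain]
  | succ n ih =>
    set P := ∏ j ∈ Finset.range n, (b (j + 1) * q)
    have hstep : ∀ u, s < u → μ (A ∩ (shift^[u] ⁻¹' oneThenZeros g ∩
        shortGapChain (oneThenZeros g) (fun j => b (j + 1)) n u)) ≤ μ A * q * P := by
      intro u hsu
      by_cases huM : u ≤ M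
      · have hempty : A ∩ (shift^[u] ⁻¹' oneThenZeros g ∩
            shortGapChain (oneThenZeros g) (fun j => b (j + 1)) n u) = ∅ :=
          Set.eq_empty_of_forall_notMem fun x hx => hfree u hsu huM x hx.1 hx.2.1
        simp [hempty]
      have hhit := dependsOn_shift_iterate_mem_oneThenZeros (g := g) u
      have hdisj : Disjoint (Finset.Icc 0 (M : ℤ)) (Finset.Icc (u : ℤ) (u + g)) :=
        Finset.disjoint_left.2 fun i hi hi' => by
          simp only [Finset.mem_Icc] at hi hi'; omega
      have hA' : DependsOn (· ∈ A ∩ shift^[u] ⁻¹' oneThenZeros g)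
          (Finset.Icc 0 ((u + g : ℕ) : ℤ) : Set ℤ) := by
        refine (hA.mono ?_).mem_inter (hhit.mono ?_) <;>
          · intro i hi
            simp only [Finset.coe_Icc, Set.mem_Icc] at hi ⊢
            omega
      rw [← Set.inter_assoc]
      calc _ ≤ μ (A ∩ shift^[u] ⁻¹' oneThenZeros g) * P :=
            ih _ hA' fun v huv hvu x hx => shift_iterate_notMem_oneThenZeros hx.2 huv hvu
        _ = μ A * q * P := by
            rw [measure_inter_eq_mul_of_dependsOn hμ.iIndepFun_coord hdisj hA hhit,
              hμ.measure_shift_iterate_preimage_oneThenZeros hp]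
    calc μ (A ∩ shortGapChain (oneThenZeros g) b (n + 1) s)
        ≤ ∑ u ∈ Finset.Ioo s (s + b 0), μ (A ∩ (shift^[u] ⁻¹' oneThenZeros g ∩
            shortGapChain (oneThenZeros g) (fun j => b (j + 1)) n u)) := by
          rw [shortGapChain, Set.inter_iUnion₂]
          exact measure_biUnion_finset_le _ _
      _ ≤ b 0 * (μ A * q * P) := by
          grw [Finset.sum_le_sum fun u hu => hstep u (Finset.mem_Ioo.1 hu).1, Finset.sum_const,
            nsmul_eq_mul, Nat.card_Ioo, Nat.add_sub_cancel_left, Nat.cast_le.2 (Nat.sub_le _ _)]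
      _ = μ A * ∏ j ∈ Finset.range (n + 1), (b j * q) := by
          rw [Finset.prod_range_succ']
          ring

end ChainBound

theorem dependsOn_mem_oneThenZeros (g : ℕ) :
    DependsOn (· ∈ oneThenZeros g) (Finset.Icc 0 (g : ℤ) : Set ℤ) := by
  simpa using dependsOn_shift_iterate_mem_oneThenZeros (g := g) 0

theorem IsBernoulli.measure_shortGaps_le {p : ℝ} {μ : Measure Sig} (hμ : IsBernoulli p μ)
    (hp : p ∈ Set.Ioo (0 : ℝ) 1) {g N : ℕ} (hgN : g ≤ N) (k n : ℕ) (b : ℕ → ℕ) :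
    μ {x ∈ oneThenZeros N | ∀ j < n,
        retTimeK (oneThenZeros g) (k + j + 1) x - retTimeK (oneThenZeros g) (k + j) x < b j} ≤
      μ (oneThenZeros N) * ∏ j ∈ Finset.range n, (b j * ENNReal.ofReal (p * (1 - p) ^ g)) := by
  set W := oneThenZeros g
  set Z := oneThenZeros N
  set C : ℕ → Set Sig := fun t => Z ∩ returnAt W k t
  have hdep : ∀ t, DependsOn (· ∈ C t) (Finset.Icc 0 ((max N (t + g) : ℕ) : ℤ) : Set ℤ) := by
    refine fun t => ((dependsOn_mem_oneThenZeros N).mono ?_).mem_inter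
      ((dependsOn_returnAt g k t).mono ?_) <;>
    · intro i hi
      simp only [Finset.coe_Icc, Set.mem_Icc] at hi ⊢
      omega
  have hfree : ∀ t u, t < u → u ≤ max N (t + g) → ∀ x ∈ C t, shift^[u] x ∉ W := by
    intro t u htu hu x ⟨hxZ, hxt, _⟩
    rcases le_max_iff.1 hu with huN | hug
    · exact shift_iterate_notMem_oneThenZeros (s := 0) hxZ (by omega) (by omega)
    · exact shift_iterate_notMem_oneThenZeros hxt htu hug
  calc _ ≤ μ (⋃ t, C t ∩ shortGapChain W b n t) := by
        refine measure_mono_ae ((hμ.ae_frequently_shift_iterate_mem_oneThenZeros hp g).mono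
          fun x hx hxE => Set.mem_iUnion.2 ⟨retTimeK W k x, ⟨hxE.1, ?_⟩, ?_⟩)
        · exact mem_returnAt_retTimeK (oneThenZeros_antitone hgN hxE.1) hx k
        · exact mem_shortGapChain_retTimeK hx hxE.2
    _ ≤ ∑' t, μ (C t) * ∏ j ∈ Finset.range n, (b j * ENNReal.ofReal (p * (1 - p) ^ g)) :=
        (measure_iUnion_le _).trans <| ENNReal.tsum_le_tsum fun t =>
          hμ.measure_inter_shortGapChain_le hp b n (hdep t) (hfree t)
    _ = μ (⋃ t, C t) * ∏ j ∈ Finset.range n, (b j * ENNReal.ofReal (p * (1 - p) ^ g)) := by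
        rw [ENNReal.tsum_mul_right, measure_iUnion (fun t t' htt' =>
          (pairwise_disjoint_returnAt W k htt').mono Set.inter_subset_right
            Set.inter_subset_right) fun t => measurableSet_of_dependsOn (hdep t)]
    _ ≤ _ := by
        gcongr
        exact Set.iUnion_subset fun t => Set.inter_subset_left

theorem two_mul_sum_Icc_add_one (n : ℕ) :
    2 * ∑ j ∈ Finset.Icc 1 n, (j + 1) + 2 = (n + 1) * (n + 2) := by
  induction n with
  | zero => simp
  | succ n ih =>
    rw [Finset.sum_Icc_succ_top (by omega)]
    linarith

theorem prod_Icc_pow_add_one_mul_le {N c : ℝ} (hN : 1 ≤ N) (hc : 0 ≤ c) (ω : ℕ) :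
    ∏ j ∈ Finset.Icc 1 ω, (N ^ (j + 1) * c) ≤ N ^ ((ω + 1) * (ω + 2) / 2) * c ^ ω := by
  rw [Finset.prod_mul_distrib, Finset.prod_const, Nat.card_Icc, Nat.add_sub_cancel,
    Finset.prod_pow_eq_pow_sum]
  gcongr
  have := two_mul_sum_Icc_add_one ω
  omega

theorem IsBernoulli.measure_returnGaps_le {p : ℝ} {μ : Measure Sig} (hμ : IsBernoulli p μ)
    (hp : p ∈ Set.Ioo (0 : ℝ) 1) {g N i : ℕ} (hgN : g ≤ N) (hi : 1 ≤ i) (ω : ℕ) :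
    μ {x ∈ oneThenZeros N | ∀ j ∈ Finset.Icc 1 ω, retTimeK (oneThenZeros g) (i + j - 1) x -
        retTimeK (oneThenZeros g) (i + j - 2) x < N ^ (j + 1)} ≤
      μ (oneThenZeros N) *
        ∏ j ∈ Finset.Icc 1 ω, ((N : ℝ≥0∞) ^ (j + 1) * ENNReal.ofReal (p * (1 - p) ^ g)) := by
  set W := oneThenZeros g
  have hevent : {x ∈ oneThenZeros N | ∀ j ∈ Finset.Icc 1 ω,
        retTimeK W (i + j - 1) x - retTimeK W (i + j - 2) x < N ^ (j + 1)} =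
      {x ∈ oneThenZeros N | ∀ j < ω,
        retTimeK W (i - 1 + j + 1) x - retTimeK W (i - 1 + j) x < N ^ (j + 2)} := by
    refine Set.sep_ext_iff.2 fun x _ => ⟨fun h j hj => ?_, fun h j hj => ?_⟩
    · have := h (j + 1) (Finset.mem_Icc.2 ⟨by omega, by omega⟩)
      rwa [show i + (j + 1) - 1 = i - 1 + j + 1 by omega,
        show i + (j + 1) - 2 = i - 1 + j by omega] at this
    · obtain ⟨hj1, hjω⟩ := Finset.mem_Icc.1 hj
      have := h (j - 1) (by omega)
      rwa [show i - 1 + (j - 1) + 1 = i + j - 1 by omega,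
        show i - 1 + (j - 1) = i + j - 2 by omega, show j - 1 + 2 = j + 1 by omega] at this
  rw [hevent, ← Finset.Ico_add_one_right_eq_Icc, Finset.prod_Ico_eq_prod_range,
    Nat.add_sub_cancel]
  convert hμ.measure_shortGaps_le hp hgN (i - 1) ω (fun j => N ^ (j + 2)) using 4 with j
  push_cast
  ring_nf

theorem stmt14_general (p : ℝ) (hp : p ∈ Set.Ioo (0 : ℝ) 1) (μ : Measure Sig)
    (hμ : IsBernoulli p μ) (N g : ℕ) (hgN : g < N)
    (Z W : Set Sig)
    (hZdef : Z = {x : Sig | x 0 = true ∧ ∀ k : ℤ, 1 ≤ k → k ≤ (N : ℤ) → x k = false})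
    (hWdef : W = {x : Sig | x 0 = true ∧ ∀ k : ℤ, 1 ≤ k → k ≤ (g : ℤ) → x k = false})
    (ω i : ℕ) (hi : 1 ≤ i) :
    (((μ Z)⁻¹ • μ.restrict Z)
      {x ∈ Z | ∀ j ∈ Finset.Icc 1 ω,
        retTimeK W (i + j - 1) x - retTimeK W (i + j - 2) x < N ^ (j + 1)} ≤
      ENNReal.ofReal (∏ j ∈ Finset.Icc 1 ω, ((N : ℝ) ^ (j + 1) * (p * (1 - p) ^ g)))) ∧
    (∏ j ∈ Finset.Icc 1 ω, ((N : ℝ) ^ (j + 1) * (p * (1 - p) ^ g))) ≤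
      (N : ℝ) ^ ((ω + 1) * (ω + 2) / 2) * (p * (1 - p) ^ g) ^ ω := by
  obtain rfl : Z = oneThenZeros N := hZdef
  obtain rfl : W = oneThenZeros g := hWdef
  have hq : 0 ≤ p * (1 - p) ^ g := mul_nonneg hp.1.le (pow_nonneg (by linarith [hp.2]) g)
  refine ⟨?_, prod_Icc_pow_add_one_mul_le (by exact_mod_cast (by omega : 1 ≤ N)) hq ω⟩
  rw [Measure.smul_apply, smul_eq_mul, ← ENNReal.div_eq_inv_mul,
    Measure.restrict_apply' (measurableSet_of_dependsOn (dependsOn_mem_oneThenZeros N)),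
    Set.inter_eq_left.2 (Set.sep_subset _ _),
    ENNReal.ofReal_prod_of_nonneg fun j _ => by positivity]
  refine ENNReal.div_le_of_le_mul' ((hμ.measure_returnGaps_le hp hgN.le hi ω).trans_eq ?_)
  congr 1
  refine Finset.prod_congr rfl fun j _ => ?_
  rw [ENNReal.ofReal_mul (by positivity : (0 : ℝ) ≤ (N : ℝ) ^ (j + 1)),
    ENNReal.ofReal_pow (Nat.cast_nonneg _), ENNReal.ofReal_natCast]

/-- bound on the probability of `ω` consecutive short `W`-return gaps. -/
theorem stmt14 (p : ℝ) (hp : p ∈ Set.Ioo (0 : ℝ) 1) (μ : Measure Sig)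
    (hμ : IsBernoulli p μ) (N g : ℕ) (hg1 : 1 ≤ g) (hgN : g < N)
    (Z W : Set Sig)
    (hZdef : Z = {x : Sig | x 0 = true ∧ ∀ k : ℤ, 1 ≤ k → k ≤ (N : ℤ) → x k = false})
    (hWdef : W = {x : Sig | x 0 = true ∧ ∀ k : ℤ, 1 ≤ k → k ≤ (g : ℤ) → x k = false})
    (hZ0 : 0 < μ Z) (ω i : ℕ) (hω : 1 ≤ ω) (hi : 1 ≤ i) :
    (((μ Z)⁻¹ • μ.restrict Z)
      {x ∈ Z | ∀ j ∈ Finset.Icc 1 ω,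
        retTimeK W (i + j - 1) x - retTimeK W (i + j - 2) x < N ^ (j + 1)} ≤
      ENNReal.ofReal (∏ j ∈ Finset.Icc 1 ω, ((N : ℝ) ^ (j + 1) * (p * (1 - p) ^ g)))) ∧
    (∏ j ∈ Finset.Icc 1 ω, ((N : ℝ) ^ (j + 1) * (p * (1 - p) ^ g))) ≤
      (N : ℝ) ^ ((ω + 1) * (ω + 2) / 2) * (p * (1 - p) ^ g) ^ ω :=
  stmt14_general p hp μ hμ N g hgN Z W hZdef hWdef ω i hi
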